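/- arXiv:2112.13638 — 7 statements merged into one kernel-verified Lean document; each statement's English description precedes it below -/
import Mathlib

section
/- Let $\mathscr{T}$ be a finite set of nonzero vectors in a finite-dimensional complex inner product space $\mathcal{H}$, and define its transition graph to have the vectors as vertices with an edge between $v,w$ iff $\langle v, w\rangle \neq 0$. If $\mathscr{T}$ spans $\mathcal{H}$ and its transition graph is connected, then any maximal subset of $\mathscr{T}$ that is linearly independent and has connected transition graph is in fact a basis of $\mathcal{H}$ (with connected transition graph). -/
open scoped ComplexInnerProductSpace

/-- The transition graph of a set of vectors: vertices are the vectors,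
two distinct vectors are adjacent iff their inner product is nonzero. -/
noncomputable def transGraph {E : Type*} [NormedAddCommGroup E] [InnerProductSpace ℂ E]
    (T : Set E) : SimpleGraph T where
  Adj v w := v ≠ w ∧ ⟪(v : E), (w : E)⟫ ≠ 0
  symm := by
    constructor
    rintro v w ⟨hne, h⟩
    exact ⟨hne.symm, fun hz => h (inner_eq_zero_symm.mp hz)⟩
  loopless := ⟨fun v h => h.1 rfl⟩

/-- Any maximal connected linearly independent subset of a finite connected spanning set of
nonzero vectors is a basis (i.e., it is also spanning), with connected transition graph. -/
theorem maximal_CLIS_is_connected_basis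
    {E : Type*} [NormedAddCommGroup E] [InnerProductSpace ℂ E] [FiniteDimensional ℂ E]
    (T S : Set E) (hTfin : T.Finite) (hT0 : ∀ v ∈ T, v ≠ 0)
    (hTspan : Submodule.span ℂ T = ⊤) (hTconn : (transGraph T).Connected)
    (hST : S ⊆ T)
    (hSli : LinearIndependent ℂ ((↑) : S → E))
    (hSconn : (transGraph S).Connected)
    (hSmax : ∀ S' : Set E, S' ⊆ T → S ⊆ S' →
      LinearIndependent ℂ ((↑) : S' → E) → (transGraph S').Connected → S' = S) :
    Submodule.span ℂ S = ⊤ ∧ (transGraph S).Connected := by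
  refine ⟨?_, hSconn⟩
  by_contra hV
  set V := Submodule.span ℂ S with hVdef
  have hTV : ¬ T ⊆ (V : Set E) := by
    intro h
    exact hV (top_unique (hTspan ▸ Submodule.span_le.mpr h))
  obtain ⟨t0, ht0T, ht0V⟩ := Set.not_subset.mp hTV
  obtain ⟨⟨s0, hs0⟩⟩ := hSconn.nonempty
  by_cases hcase : ∃ t ∈ T, t ∉ V ∧ ∃ s ∈ S, (inner ℂ t s : ℂ) ≠ 0
  · obtain ⟨t, htT, htV, s, hsS, hts⟩ := hcase
    have htS : t ∉ S := fun h => htV (Submodule.subset_span h)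
    have hli : LinearIndependent ℂ ((↑) : ↥(insert t S) → E) :=
      LinearIndepOn.insert (v := id) hSli (by simpa using htV)
    have hadj : (transGraph (insert t S)).Adj ⟨t, Set.mem_insert t S⟩
        ⟨s, Set.mem_insert_of_mem t hsS⟩ := by
      refine ⟨?_, hts⟩
      intro h
      have : t = s := Subtype.ext_iff.mp h
      exact htS (this ▸ hsS)
    let f : transGraph S →g transGraph (insert t S) :=
      ⟨Set.inclusion (Set.subset_insert t S), fun {a b} hab =>
        ⟨fun h => hab.1 (by
          have h2 := congrArg Subtype.val h
          exact Subtype.ext h2), hab.2⟩⟩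
    have hreach : ∀ u : (insert t S : Set E),
        (transGraph (insert t S)).Reachable u ⟨s, Set.mem_insert_of_mem t hsS⟩ := by
      rintro ⟨u, hu⟩
      rcases hu with rfl | hu
      · exact hadj.reachable
      · have := (hSconn ⟨u, hu⟩ ⟨s, hsS⟩).map f
        exact this
    haveI : Nonempty (insert t S : Set E) := ⟨⟨t, Set.mem_insert t S⟩⟩
    have hconn : (transGraph (insert t S)).Connected :=
      SimpleGraph.Connected.mk (fun u w => (hreach u).trans (hreach w).symm)
    have := hSmax (insert t S) (Set.insert_subset htT hST) (Set.subset_insert t S) hli hconn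
    exact htS (this ▸ Set.mem_insert t S)
  · push_neg at hcase
    have horth : ∀ t ∈ T, t ∉ V → ∀ v ∈ V, ⟪t, v⟫ = 0 := by
      intro t htT htV v hv
      have hker : V ≤ LinearMap.ker (innerSL ℂ t : E →ₗ[ℂ] ℂ) := by
        rw [hVdef]
        refine Submodule.span_le.mpr ?_
        intro x hx
        simpa using hcase t htT htV x hx
      simpa using hker hv
    have key : ∀ (u w : T), (transGraph T).Reachable u w → (u : E) ∈ V → (w : E) ∈ V := by
      intro u w h
      obtain ⟨p⟩ := h
      induction p with
      | nil => exact id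
      | cons h p ih =>
        rename_i a b c
        intro haV
        refine ih ?_
        by_contra hbV
        have : ⟪(b : E), (a : E)⟫ = 0 := horth b b.2 hbV a haV
        exact h.2 (inner_eq_zero_symm.mp this)
    exact ht0V (key ⟨s0, hST hs0⟩ ⟨t0, ht0T⟩ (hTconn _ _) (Submodule.subset_span hs0))
end

section
/- Let $|\Psi\rangle = \sum_{j=0}^{r-1}\lambda_j |j\rangle\otimes|j\rangle$ be a unit vector in $\mathbb{C}^r \otimes \mathbb{C}^r$ with $\lambda_j \geq 0$ and $\sum_j \lambda_j^2 = 1$. Define projectors $P_1 = \sum_{j=0}^{r-1}|jj\rangle\langle jj|$ and $P_2 = I - |u\rangle\langle u|\otimes I + |u\rangle\langle u|\otimes|v\rangle\langle v|$, where $|u\rangle = \frac{1}{\sqrt{r}}\sum_j |j\rangle$ and $|v\rangle = \sum_j \lambda_j|j\rangle$. Let $\bar{P}_k = P_k - |\Psi\rangle\langle\Psi|$ for $k=1,2$. Then the operator norm of $\bar{P}_1\bar{P}_2\bar{P}_1$ equals $(r-1)/r$. -/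
open scoped Kronecker

namespace Stmt4

variable (r : ℕ)

/-- The Schmidt-form state `|Ψ⟩ = ∑ⱼ λⱼ |jj⟩` in `ℂ^r ⊗ ℂ^r ≅ ℂ^(r×r)`. -/
noncomputable def Psi (lam : Fin r → ℝ) : EuclideanSpace ℂ (Fin r × Fin r) :=
  WithLp.toLp 2 (fun p => if p.1 = p.2 then (lam p.1 : ℂ) else 0)

/-- The rank-one projector `|Ψ⟩⟨Ψ|` as a matrix. -/
noncomputable def PsiProj (lam : Fin r → ℝ) : Matrix (Fin r × Fin r) (Fin r × Fin r) ℂ :=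
  Matrix.of fun p q => Psi r lam p * star (Psi r lam q)

/-- `P₁ = ∑ⱼ |jj⟩⟨jj|`. -/
def P1 : Matrix (Fin r × Fin r) (Fin r × Fin r) ℂ :=
  Matrix.of fun p q => if p = q ∧ p.1 = p.2 then 1 else 0

/-- The outer product `|x⟩⟨x|` of a vector in `ℂ^r`. -/
def outer (x : Fin r → ℂ) : Matrix (Fin r) (Fin r) ℂ :=
  Matrix.of fun i j => x i * star (x j)

/-- `|u⟩ = (1/√r) ∑ⱼ |j⟩`. -/
noncomputable def uVec : Fin r → ℂ := fun _ => (((Real.sqrt r)⁻¹ : ℝ) : ℂ)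

/-- `|v⟩ = ∑ⱼ λⱼ |j⟩`. -/
noncomputable def vVec (lam : Fin r → ℝ) : Fin r → ℂ := fun j => (lam j : ℂ)

/-- `P₂ = I - |u⟩⟨u| ⊗ I + |u⟩⟨u| ⊗ |v⟩⟨v|`. -/
noncomputable def P2 (lam : Fin r → ℝ) : Matrix (Fin r × Fin r) (Fin r × Fin r) ℂ :=
  1 - (outer r (uVec r)) ⊗ₖ 1 + (outer r (uVec r)) ⊗ₖ (outer r (vVec r lam))

/-! Auxiliary -/

def Emb (M : Matrix (Fin r) (Fin r) ℂ) : Matrix (Fin r × Fin r) (Fin r × Fin r) ℂ :=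
  Matrix.of fun p q => if p.1 = p.2 ∧ q.1 = q.2 then M p.1 q.1 else 0

def compress (C : Matrix (Fin r × Fin r) (Fin r × Fin r) ℂ) : Matrix (Fin r) (Fin r) ℂ :=
  Matrix.of fun j k => C (j, j) (k, k)

lemma emb_mul_mul_emb (M N : Matrix (Fin r) (Fin r) ℂ)
    (C : Matrix (Fin r × Fin r) (Fin r × Fin r) ℂ) :
    Emb r M * C * Emb r N = Emb r (M * compress r C * N) := by
  ext ⟨i1, i2⟩ ⟨k1, k2⟩
  simp only [Emb, compress, Matrix.mul_apply, Fintype.sum_prod_type, ite_and, Matrix.of_apply,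
    ite_mul, mul_ite, zero_mul, mul_zero, Finset.sum_ite_eq, Finset.sum_ite_eq',
    Finset.mem_univ, if_true, Finset.sum_mul, Finset.mul_sum]
  split_ifs <;> simp

lemma emb_mul_emb (M N : Matrix (Fin r) (Fin r) ℂ) :
    Emb r M * Emb r N = Emb r (M * N) := by
  ext ⟨i1, i2⟩ ⟨k1, k2⟩
  simp only [Emb, Matrix.mul_apply, Fintype.sum_prod_type, ite_and, Matrix.of_apply,
    ite_mul, mul_ite, zero_mul, mul_zero, Finset.sum_ite_eq, Finset.sum_ite_eq',
    Finset.mem_univ, if_true]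
  split_ifs <;> simp

lemma emb_smul (c : ℂ) (M : Matrix (Fin r) (Fin r) ℂ) : Emb r (c • M) = c • Emb r M := by
  ext ⟨i1, i2⟩ ⟨k1, k2⟩
  simp only [Emb, Matrix.smul_apply, Matrix.of_apply, smul_eq_mul]
  split_ifs <;> simp

lemma hB (lam : Fin r → ℝ) :
    P1 r - PsiProj r lam = Emb r (1 - outer r (vVec r lam)) := by
  ext ⟨i1, i2⟩ ⟨k1, k2⟩
  simp only [P1, PsiProj, Psi, Emb, outer, vVec, Matrix.sub_apply, Matrix.of_apply,
    Matrix.one_apply, Prod.mk.injEq, ite_and, RCLike.star_def, Complex.conj_ofReal, WithLp.ofLp_toLp]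
  split_ifs <;> simp_all

lemma hSS (lam : Fin r → ℝ) (hnorm : ∑ j, (lam j) ^ 2 = 1) :
    (1 - outer r (vVec r lam)) * (1 - outer r (vVec r lam)) = 1 - outer r (vVec r lam) := by
  have hsum : (∑ j, ((lam j : ℂ)) ^ 2) = 1 := by exact_mod_cast congrArg Complex.ofReal hnorm
  have hPP : outer r (vVec r lam) * outer r (vVec r lam) = outer r (vVec r lam) := by
    ext i k
    simp only [outer, vVec, Matrix.mul_apply, Matrix.of_apply, RCLike.star_def,
      Complex.conj_ofReal]
    calc (∑ s, (lam i : ℂ) * (lam s) * ((lam s) * (lam k)))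
        = ((lam i : ℂ) * (lam k)) * ∑ s, ((lam s : ℂ))^2 := by
          rw [Finset.mul_sum]; congr 1; ext s; ring
      _ = (lam i : ℂ) * (lam k) := by rw [hsum, mul_one]
  rw [sub_mul, one_mul, mul_sub, mul_one, hPP]
  abel

lemma hcomp (lam : Fin r → ℝ) (hr : r ≠ 0) :
    compress r (P2 r lam - PsiProj r lam)
      = ((((r : ℝ) - 1) / r : ℝ) : ℂ) • (1 - outer r (vVec r lam)) := by
  have hrC : (r : ℂ) ≠ 0 := Nat.cast_ne_zero.mpr hr
  have hu : ((((Real.sqrt r)⁻¹ : ℝ)) : ℂ) * ((((Real.sqrt r)⁻¹ : ℝ)) : ℂ) = ((r : ℂ))⁻¹ := by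
    rw [← Complex.ofReal_mul, ← mul_inv, Real.mul_self_sqrt (Nat.cast_nonneg r),
      Complex.ofReal_inv, Complex.ofReal_natCast]
  ext j k
  simp only [compress, P2, PsiProj, Psi, uVec, vVec, outer, Matrix.sub_apply, Matrix.add_apply,
    Matrix.of_apply, Matrix.kroneckerMap_apply, Matrix.one_apply, Matrix.smul_apply,
    Prod.mk.injEq, and_self, RCLike.star_def, Complex.conj_ofReal, smul_eq_mul, if_true,
    Complex.ofReal_div, Complex.ofReal_sub, Complex.ofReal_natCast, Complex.ofReal_one, WithLp.ofLp_toLp]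
  rw [hu]
  split_ifs with h
  · field_simp
    ring
  · field_simp
    ring


open scoped Matrix in
lemma emb_sa (r : ℕ) (lam : Fin r → ℝ) :
    (Emb r (1 - outer r (vVec r lam)))ᴴ = Emb r (1 - outer r (vVec r lam)) := by
  have h1 : ∀ (M : Matrix (Fin r) (Fin r) ℂ), (Emb r M)ᴴ = Emb r Mᴴ := by
    intro M
    ext ⟨i1, i2⟩ ⟨k1, k2⟩
    simp only [Matrix.conjTranspose_apply, Emb, Matrix.of_apply]
    split_ifs with ha hb hb
    · rfl
    · exact absurd ⟨ha.2, ha.1⟩ hb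
    · exact absurd ⟨hb.2, hb.1⟩ ha
    · exact star_zero ℂ
  have houter : (outer r (vVec r lam))ᴴ = outer r (vVec r lam) := by
    ext i k
    simp only [Matrix.conjTranspose_apply, outer, vVec, Matrix.of_apply, star_mul',
      RCLike.star_def, Complex.conj_ofReal]
    ring
  rw [h1, Matrix.conjTranspose_sub, Matrix.conjTranspose_one, houter]


set_option maxHeartbeats 1000000 in
set_option synthInstance.maxHeartbeats 400000 in
/-- The operator norm of `P̄₁ P̄₂ P̄₁`, where `P̄ₖ = Pₖ - |Ψ⟩⟨Ψ|`, equals `(r-1)/r`. -/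
theorem opNorm_P1bar_P2bar_P1bar (lam : Fin r → ℝ) (hlam : ∀ j, 0 ≤ lam j)
    (hnorm : ∑ j, (lam j) ^ 2 = 1) :
    ‖Matrix.toEuclideanCLM (𝕜 := ℂ)
        ((P1 r - PsiProj r lam) * (P2 r lam - PsiProj r lam) * (P1 r - PsiProj r lam))‖
      = ((r : ℝ) - 1) / r := by
  by_cases hr0 : r = 0
  · subst hr0
    have hzero : (P1 0 - PsiProj 0 lam) * (P2 0 lam - PsiProj 0 lam) * (P1 0 - PsiProj 0 lam)
        = 0 := by
      ext ⟨i, j⟩ k; exact i.elim0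
    rw [hzero]; simp
  have hkey : (P1 r - PsiProj r lam) * (P2 r lam - PsiProj r lam) * (P1 r - PsiProj r lam)
      = ((((r : ℝ) - 1) / r : ℝ) : ℂ) • Emb r (1 - outer r (vVec r lam)) := by
    rw [hB, emb_mul_mul_emb, hcomp r lam hr0, ← emb_smul]
    rw [mul_smul_comm, smul_mul_assoc, hSS r lam hnorm, hSS r lam hnorm]
  rw [hkey, map_smul]
  have hns : ‖(((((r : ℝ) - 1) / r : ℝ)) : ℂ) •
        Matrix.toEuclideanCLM (𝕜 := ℂ) (Emb r (1 - outer r (vVec r lam)))‖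
      = ‖((((r : ℝ) - 1) / r : ℝ))‖ *
        ‖Matrix.toEuclideanCLM (𝕜 := ℂ) (Emb r (1 - outer r (vVec r lam)))‖ := by
    have hgen := norm_smul (α := ℂ) ((((r : ℝ) - 1) / r : ℝ) : ℂ)
      (Matrix.toEuclideanCLM (𝕜 := ℂ) (Emb r (1 - outer r (vVec r lam))))
    simp only [Complex.norm_real] at hgen
    convert hgen using 2
  rw [hns]
  have hr1le : (1 : ℝ) ≤ r := by exact_mod_cast Nat.one_le_iff_ne_zero.mpr hr0
  have habs : ‖(((r : ℝ) - 1) / r : ℝ)‖ = ((r : ℝ) - 1) / r := by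
    rw [Real.norm_eq_abs, abs_of_nonneg]
    apply div_nonneg <;> linarith
  rw [habs]
  by_cases hr1 : r = 1
  · subst hr1; norm_num
  -- now r ≥ 2
  set T := Matrix.toEuclideanCLM (𝕜 := ℂ) (Emb r (1 - outer r (vVec r lam))) with hT
  have hmul : T * T = T := by
    rw [hT, ← map_mul, emb_mul_emb, hSS r lam hnorm]
  have hTne : T ≠ 0 := by
    obtain ⟨j0, -, hj0⟩ := Finset.exists_ne_zero_of_sum_ne_zero
      (by rw [hnorm]; exact one_ne_zero : ∑ j, (lam j) ^ 2 ≠ 0)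
    have hj0' : lam j0 ≠ 0 := fun h => hj0 (by rw [h]; ring)
    have hcard : 1 < Fintype.card (Fin r) := by simp; omega
    obtain ⟨k0, hk0⟩ := Fintype.exists_ne_of_one_lt_card hcard j0
    intro hT0
    have hM : Emb r (1 - outer r (vVec r lam)) = 0 := by
      have h' : Matrix.toEuclideanCLM (𝕜 := ℂ) (Emb r (1 - outer r (vVec r lam)))
          = Matrix.toEuclideanCLM (𝕜 := ℂ) (0 : Matrix (Fin r × Fin r) (Fin r × Fin r) ℂ) := by
        rw [map_zero, ← hT, hT0]
      exact Matrix.toEuclideanCLM.injective h'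
    have e1 := congrFun (congrFun hM (k0, k0)) (k0, k0)
    have e2 := congrFun (congrFun hM (k0, k0)) (j0, j0)
    simp only [Emb, Matrix.of_apply, Matrix.sub_apply, Matrix.one_apply, outer, vVec,
      RCLike.star_def, Complex.conj_ofReal, and_self, if_true, Matrix.zero_apply,
      if_pos rfl, if_neg hk0] at e1 e2
    have e2' : lam k0 * lam j0 = 0 := by
      have : ((lam k0 : ℂ)) * lam j0 = 0 := by linear_combination -e2
      exact_mod_cast this
    have hk00 : lam k0 = 0 := by
      rcases mul_eq_zero.mp e2' with h | h
      · exact h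
      · exact absurd h hj0'
    rw [hk00] at e1
    simp at e1
  have hnormT : ‖T‖ * ‖T‖ = ‖T‖ := by
    have hstar : star T = T := by
      rw [hT, ← map_star, Matrix.star_eq_conjTranspose, emb_sa]
    calc ‖T‖ * ‖T‖ = ‖star T * T‖ := (CStarRing.norm_star_mul_self).symm
      _ = ‖T‖ := by rw [hstar, hmul]
  have : ‖T‖ = 1 := by
    have h0 : ‖T‖ ≠ 0 := norm_ne_zero_iff.mpr hTne
    field_simp at hnormT
    tauto
  rw [this, mul_one]


end Stmt4
end

section
/- For real parameters $0 \le \alpha_3 \le \alpha_2 \le \alpha_1 \le \pi/4$, define $|\zeta_0|^2 = \cos^2\alpha_1\cos^2\alpha_2\cos^2\alpha_3 + \sin^2\alpha_1\sin^2\alpha_2\sin^2\alpha_3$, $|\zeta_1|^2 = \cos^2\alpha_1\sin^2\alpha_2\sin^2\alpha_3 + \sin^2\alpha_1\cos^2\alpha_2\cos^2\alpha_3$, $|\zeta_2|^2 = \sin^2\alpha_1\cos^2\alpha_2\sin^2\alpha_3 + \cos^2\alpha_1\sin^2\alpha_2\cos^2\alpha_3$, $|\zeta_3|^2 = \sin^2\alpha_1\sin^2\alpha_2\cos^2\alpha_3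 + \cos^2\alpha_1\cos^2\alpha_2\sin^2\alpha_3$. Then $|\zeta_0| \ge |\zeta_1| \ge |\zeta_2| \ge |\zeta_3| \ge 0$ and $|\zeta_0|^2+|\zeta_1|^2+|\zeta_2|^2+|\zeta_3|^2 = 1$. -/
open Real

/-- `|ζ₀|²` for the canonical two-qubit unitary `U(α₁,α₂,α₃)`. -/
noncomputable def z0sq (a1 a2 a3 : ℝ) : ℝ :=
  cos a1 ^ 2 * cos a2 ^ 2 * cos a3 ^ 2 + sin a1 ^ 2 * sin a2 ^ 2 * sin a3 ^ 2

/-- `|ζ₁|²` for the canonical two-qubit unitary `U(α₁,α₂,α₃)`. -/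
noncomputable def z1sq (a1 a2 a3 : ℝ) : ℝ :=
  cos a1 ^ 2 * sin a2 ^ 2 * sin a3 ^ 2 + sin a1 ^ 2 * cos a2 ^ 2 * cos a3 ^ 2

/-- `|ζ₂|²` for the canonical two-qubit unitary `U(α₁,α₂,α₃)`. -/
noncomputable def z2sq (a1 a2 a3 : ℝ) : ℝ :=
  sin a1 ^ 2 * cos a2 ^ 2 * sin a3 ^ 2 + cos a1 ^ 2 * sin a2 ^ 2 * cos a3 ^ 2

/-- `|ζ₃|²` for the canonical two-qubit unitary `U(α₁,α₂,α₃)`. -/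
noncomputable def z3sq (a1 a2 a3 : ℝ) : ℝ :=
  sin a1 ^ 2 * sin a2 ^ 2 * cos a3 ^ 2 + cos a1 ^ 2 * cos a2 ^ 2 * sin a3 ^ 2

set_option maxHeartbeats 1000000 in
/-- The Schmidt coefficients of `U(α₁,α₂,α₃)` are nonincreasing and normalized. -/
theorem schmidt_coeff_order_and_norm (a1 a2 a3 : ℝ)
    (h3 : 0 ≤ a3) (h32 : a3 ≤ a2) (h21 : a2 ≤ a1) (h1 : a1 ≤ π / 4) :
    Real.sqrt (z0sq a1 a2 a3) ≥ Real.sqrt (z1sq a1 a2 a3) ∧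
    Real.sqrt (z1sq a1 a2 a3) ≥ Real.sqrt (z2sq a1 a2 a3) ∧
    Real.sqrt (z2sq a1 a2 a3) ≥ Real.sqrt (z3sq a1 a2 a3) ∧
    Real.sqrt (z3sq a1 a2 a3) ≥ 0 ∧
    z0sq a1 a2 a3 + z1sq a1 a2 a3 + z2sq a1 a2 a3 + z3sq a1 a2 a3 = 1 := by
  have hpi : (0:ℝ) < π := Real.pi_pos
  have h2 : 0 ≤ a2 := le_trans h3 h32
  have h1' : 0 ≤ a1 := le_trans h2 h21
  have ha2 : a2 ≤ π / 4 := le_trans h21 h1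
  have ha3 : a3 ≤ π / 4 := le_trans h32 ha2
  have hs1 : 0 ≤ sin a1 := Real.sin_nonneg_of_nonneg_of_le_pi h1' (by linarith)
  have hs2 : 0 ≤ sin a2 := Real.sin_nonneg_of_nonneg_of_le_pi h2 (by linarith)
  have hs3 : 0 ≤ sin a3 := Real.sin_nonneg_of_nonneg_of_le_pi h3 (by linarith)
  have key : ∀ a : ℝ, 0 ≤ a → a ≤ π / 4 → sin a ≤ cos a := by
    intro a ha hb
    have h := Real.sin_nonneg_of_nonneg_of_le_pi (x := π / 4 - a) (by linarith) (by linarith)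
    rw [Real.sin_sub, Real.sin_pi_div_four, Real.cos_pi_div_four] at h
    nlinarith [Real.sqrt_pos.mpr (show (0:ℝ) < 2 by norm_num)]
  have hc1 : sin a1 ≤ cos a1 := key a1 h1' h1
  have hc2 : sin a2 ≤ cos a2 := key a2 h2 ha2
  have hc3 : sin a3 ≤ cos a3 := key a3 h3 ha3
  have hcos1 : 0 ≤ cos a1 := le_trans hs1 hc1
  have hcos2 : 0 ≤ cos a2 := le_trans hs2 hc2
  have hcos3 : 0 ≤ cos a3 := le_trans hs3 hc3
  have h12 : sin a2 * cos a1 ≤ sin a1 * cos a2 := by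
    have h := Real.sin_nonneg_of_nonneg_of_le_pi (x := a1 - a2) (by linarith) (by linarith)
    rw [Real.sin_sub] at h; linarith
  have h23 : sin a3 * cos a2 ≤ sin a2 * cos a3 := by
    have h := Real.sin_nonneg_of_nonneg_of_le_pi (x := a2 - a3) (by linarith) (by linarith)
    rw [Real.sin_sub] at h; linarith
  have p1 := Real.sin_sq_add_cos_sq a1
  have p2 := Real.sin_sq_add_cos_sq a2
  have p3 := Real.sin_sq_add_cos_sq a3
  have A1 : sin a1 ^ 2 ≤ cos a1 ^ 2 := pow_le_pow_left₀ hs1 hc1 2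
  have A2 : sin a2 ^ 2 ≤ cos a2 ^ 2 := pow_le_pow_left₀ hs2 hc2 2
  have A3 : sin a3 ^ 2 ≤ cos a3 ^ 2 := pow_le_pow_left₀ hs3 hc3 2
  have sq12 : cos a1 ^ 2 * sin a2 ^ 2 ≤ sin a1 ^ 2 * cos a2 ^ 2 := by
    calc cos a1 ^ 2 * sin a2 ^ 2 = (sin a2 * cos a1) ^ 2 := by ring
      _ ≤ (sin a1 * cos a2) ^ 2 := pow_le_pow_left₀ (mul_nonneg hs2 hcos1) h12 2
      _ = sin a1 ^ 2 * cos a2 ^ 2 := by ring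
  have sq23 : cos a2 ^ 2 * sin a3 ^ 2 ≤ sin a2 ^ 2 * cos a3 ^ 2 := by
    calc cos a2 ^ 2 * sin a3 ^ 2 = (sin a3 * cos a2) ^ 2 := by ring
      _ ≤ (sin a2 * cos a3) ^ 2 := pow_le_pow_left₀ (mul_nonneg hs3 hcos2) h23 2
      _ = sin a2 ^ 2 * cos a3 ^ 2 := by ring
  have B : sin a2 ^ 2 * sin a3 ^ 2 ≤ cos a2 ^ 2 * cos a3 ^ 2 :=
    mul_le_mul A2 A3 (sq_nonneg _) (le_trans (sq_nonneg _) A2)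
  have e10 : z1sq a1 a2 a3 ≤ z0sq a1 a2 a3 := by
    have hfac : z0sq a1 a2 a3 - z1sq a1 a2 a3 =
        (cos a1 ^ 2 - sin a1 ^ 2) * (cos a2 ^ 2 * cos a3 ^ 2 - sin a2 ^ 2 * sin a3 ^ 2) := by
      unfold z0sq z1sq; ring
    have := mul_nonneg (sub_nonneg.2 A1) (sub_nonneg.2 B)
    linarith
  have e21 : z2sq a1 a2 a3 ≤ z1sq a1 a2 a3 := by
    have hfac : z1sq a1 a2 a3 - z2sq a1 a2 a3 =
        (cos a3 ^ 2 - sin a3 ^ 2) * (sin a1 ^ 2 * cos a2 ^ 2 - cos a1 ^ 2 * sin a2 ^ 2) := by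
      unfold z1sq z2sq; ring
    have := mul_nonneg (sub_nonneg.2 A3) (sub_nonneg.2 sq12)
    linarith
  have e32 : z3sq a1 a2 a3 ≤ z2sq a1 a2 a3 := by
    have hfac : z2sq a1 a2 a3 - z3sq a1 a2 a3 =
        (cos a1 ^ 2 - sin a1 ^ 2) * (sin a2 ^ 2 * cos a3 ^ 2 - cos a2 ^ 2 * sin a3 ^ 2) := by
      unfold z2sq z3sq; ring
    have := mul_nonneg (sub_nonneg.2 A1) (sub_nonneg.2 sq23)
    linarith
  refine ⟨Real.sqrt_le_sqrt e10, Real.sqrt_le_sqrt e21, Real.sqrt_le_sqrt e32,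
    Real.sqrt_nonneg _, ?_⟩
  unfold z0sq z1sq z2sq z3sq
  linear_combination ((sin a2 ^ 2 + cos a2 ^ 2) * (sin a3 ^ 2 + cos a3 ^ 2)) * p1 +
    (sin a3 ^ 2 + cos a3 ^ 2) * p2 + p3
end

section
/- With $|\zeta_k|$ defined as in the canonical two-qubit Schmidt coefficient formulas and $0 \le \alpha_3 \le \alpha_2 \le \alpha_1 \le \pi/4$: the equality $|\zeta_0| = |\zeta_1|$ holds iff $\alpha_1 = \pi/4$; the equality $|\zeta_1| = |\zeta_2|$ holds iff $\alpha_2 = \alpha_1$; the equality $|\zeta_2| = |\zeta_3|$ holds iff $\alpha_1 = \pi/4$ or $\alpha_3 = \alpha_2$; and $|\zeta_3| = 0$ iff $\alpha_2 = \alpha_3 = 0$. -/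
open Real

private lemma sin_eq_zero_pt (x : ℝ) (h0 : 0 ≤ x) (h : x < π) (hs : Real.sin x = 0) : x = 0 := by
  rcases eq_or_lt_of_le h0 with h'|h'
  · exact h'.symm
  · exact absurd hs (ne_of_gt (Real.sin_pos_of_pos_of_lt_pi h' h))

private lemma cos_eq_zero_pt (x : ℝ) (h0 : 0 ≤ x) (h : x ≤ π/2) (hc : Real.cos x = 0) : x = π/2 := by
  rcases eq_or_lt_of_le h with h'|h'
  · exact h'
  · have := Real.cos_pos_of_mem_Ioo (show x ∈ Set.Ioo (-(π/2)) (π/2) from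
      ⟨by linarith [Real.pi_pos], h'⟩)
    linarith

set_option maxHeartbeats 2000000 in
/-- Saturation conditions for the ordering of the Schmidt coefficients of `U(α₁,α₂,α₃)`. -/
theorem schmidt_coeff_saturation (a1 a2 a3 : ℝ)
    (h3 : 0 ≤ a3) (h32 : a3 ≤ a2) (h21 : a2 ≤ a1) (h1 : a1 ≤ π / 4) :
    (Real.sqrt (z0sq a1 a2 a3) = Real.sqrt (z1sq a1 a2 a3) ↔ a1 = π / 4) ∧
    (Real.sqrt (z1sq a1 a2 a3) = Real.sqrt (z2sq a1 a2 a3) ↔ a2 = a1) ∧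
    (Real.sqrt (z2sq a1 a2 a3) = Real.sqrt (z3sq a1 a2 a3) ↔ a1 = π / 4 ∨ a3 = a2) ∧
    (Real.sqrt (z3sq a1 a2 a3) = 0 ↔ a2 = 0 ∧ a3 = 0) := by
  have hπ := Real.pi_pos
  have h2 : 0 ≤ a2 := le_trans h3 h32
  have h0 : 0 ≤ a1 := le_trans h2 h21
  have hc1 : 0 < cos a1 := Real.cos_pos_of_mem_Ioo ⟨by linarith, by linarith⟩
  have hc2 : 0 < cos a2 := Real.cos_pos_of_mem_Ioo ⟨by linarith, by linarith⟩
  have hc3 : 0 < cos a3 := Real.cos_pos_of_mem_Ioo ⟨by linarith, by linarith⟩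
  have hs1 : 0 ≤ sin a1 := Real.sin_nonneg_of_nonneg_of_le_pi h0 (by linarith)
  have hs2 : 0 ≤ sin a2 := Real.sin_nonneg_of_nonneg_of_le_pi h2 (by linarith)
  have hs3 : 0 ≤ sin a3 := Real.sin_nonneg_of_nonneg_of_le_pi h3 (by linarith)
  -- equality of sin/cos at a point forces the point to be π/4
  have key1 : ∀ x : ℝ, 0 ≤ x → x ≤ π/4 → sin x = cos x → x = π/4 := by
    intro x hx0 hx1 hxe
    have : sin x = sin (π/2 - x) := by rw [Real.sin_pi_div_two_sub]; exact hxe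
    have hinj := Real.injOn_sin (Set.mem_Icc.mpr ⟨by linarith, by linarith⟩)
      (Set.mem_Icc.mpr ⟨by linarith, by linarith⟩) this
    linarith
  -- nonnegativity of the squared magnitudes
  have hz0 : 0 ≤ z0sq a1 a2 a3 := by unfold z0sq; positivity
  have hz1 : 0 ≤ z1sq a1 a2 a3 := by unfold z1sq; positivity
  have hz2 : 0 ≤ z2sq a1 a2 a3 := by unfold z2sq; positivity
  have hz3 : 0 ≤ z3sq a1 a2 a3 := by unfold z3sq; positivity
  refine ⟨?_, ?_, ?_, ?_⟩
  · -- ζ₀ = ζ₁ ↔ a1 = π/4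
    rw [Real.sqrt_inj hz0 hz1]
    constructor
    · intro h
      have hfac : (cos a1 - sin a1) * (cos a1 + sin a1) *
          ((cos a2 * cos a3 - sin a2 * sin a3) * (cos a2 * cos a3 + sin a2 * sin a3)) = 0 := by
        have : z0sq a1 a2 a3 - z1sq a1 a2 a3 = 0 := sub_eq_zero.mpr h
        unfold z0sq z1sq at this; linear_combination this
      rcases mul_eq_zero.mp hfac with hf | hf
      · rcases mul_eq_zero.mp hf with hf' | hf'
        · exact key1 a1 h0 h1 (by linarith)
        · linarith
      · rcases mul_eq_zero.mp hf with hf' | hf'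
        · -- cos(a2+a3) = 0 ⇒ a2+a3 = π/2 ⇒ a2 = a3 = π/4 ⇒ a1 = π/4
          have hca : Real.cos (a2 + a3) = 0 := by rw [Real.cos_add]; linarith
          have := cos_eq_zero_pt (a2 + a3) (by linarith) (by linarith) hca
          linarith
        · have := mul_pos hc2 hc3
          have := mul_nonneg hs2 hs3
          linarith
    · intro h
      subst h
      unfold z0sq z1sq
      rw [Real.sin_pi_div_four, Real.cos_pi_div_four]
      ring
  · -- ζ₁ = ζ₂ ↔ a2 = a1
    rw [Real.sqrt_inj hz1 hz2]
    constructor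
    · intro h
      have hfac : (cos a3 - sin a3) * (cos a3 + sin a3) *
          ((sin a1 * cos a2 - cos a1 * sin a2) * (sin a1 * cos a2 + cos a1 * sin a2)) = 0 := by
        have : z1sq a1 a2 a3 - z2sq a1 a2 a3 = 0 := sub_eq_zero.mpr h
        unfold z1sq z2sq at this; linear_combination this
      rcases mul_eq_zero.mp hfac with hf | hf
      · rcases mul_eq_zero.mp hf with hf' | hf'
        · -- a3 = π/4 forces a2 = a1 = π/4
          have := key1 a3 h3 (by linarith) (by linarith)
          linarith
        · linarith
      · rcases mul_eq_zero.mp hf with hf' | hf'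
        · -- sin (a1 - a2) = 0
          have hsa : Real.sin (a1 - a2) = 0 := by rw [Real.sin_sub]; linarith
          have := sin_eq_zero_pt (a1 - a2) (by linarith) (by linarith) hsa
          linarith
        · -- sin (a1 + a2) = 0 ⇒ a1 = a2 = 0
          have hsa : Real.sin (a1 + a2) = 0 := by rw [Real.sin_add]; linarith
          have := sin_eq_zero_pt (a1 + a2) (by linarith) (by linarith) hsa
          linarith
    · intro h
      subst h
      unfold z1sq z2sq
      ring
  · -- ζ₂ = ζ₃ ↔ a1 = π/4 ∨ a3 = a2
    rw [Real.sqrt_inj hz2 hz3]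
    constructor
    · intro h
      have hfac : (cos a1 - sin a1) * (cos a1 + sin a1) *
          ((sin a2 * cos a3 - cos a2 * sin a3) * (sin a2 * cos a3 + cos a2 * sin a3)) = 0 := by
        have : z2sq a1 a2 a3 - z3sq a1 a2 a3 = 0 := sub_eq_zero.mpr h
        unfold z2sq z3sq at this; linear_combination this
      rcases mul_eq_zero.mp hfac with hf | hf
      · rcases mul_eq_zero.mp hf with hf' | hf'
        · exact Or.inl (key1 a1 h0 h1 (by linarith))
        · linarith
      · rcases mul_eq_zero.mp hf with hf' | hf'
        · -- sin (a2 - a3) = 0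
          have hsa : Real.sin (a2 - a3) = 0 := by rw [Real.sin_sub]; linarith
          have := sin_eq_zero_pt (a2 - a3) (by linarith) (by linarith) hsa
          right; linarith
        · -- sin (a2 + a3) = 0 ⇒ a2 = a3 = 0
          have hsa : Real.sin (a2 + a3) = 0 := by rw [Real.sin_add]; linarith
          have := sin_eq_zero_pt (a2 + a3) (by linarith) (by linarith) hsa
          right; linarith
    · intro h
      rcases h with h | h
      · subst h
        unfold z2sq z3sq
        rw [Real.sin_pi_div_four, Real.cos_pi_div_four]
        ring
      · subst h
        unfold z2sq z3sq
        ring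
  · -- ζ₃ = 0 ↔ a2 = 0 ∧ a3 = 0
    rw [Real.sqrt_eq_zero hz3]
    constructor
    · intro h
      unfold z3sq at h
      have hp1 : 0 ≤ sin a1 ^ 2 * sin a2 ^ 2 * cos a3 ^ 2 := by positivity
      have hp2 : 0 ≤ cos a1 ^ 2 * cos a2 ^ 2 * sin a3 ^ 2 := by positivity
      have ht1 : sin a1 ^ 2 * sin a2 ^ 2 * cos a3 ^ 2 = 0 := by linarith
      have ht2 : cos a1 ^ 2 * cos a2 ^ 2 * sin a3 ^ 2 = 0 := by linarith
      have hsin3 : sin a3 = 0 := by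
        have hne : cos a1 ^ 2 * cos a2 ^ 2 ≠ 0 :=
          mul_ne_zero (pow_ne_zero 2 hc1.ne') (pow_ne_zero 2 hc2.ne')
        have := (mul_eq_zero.mp ht2).resolve_left hne
        exact sq_eq_zero_iff.mp this
      have ha3 : a3 = 0 := sin_eq_zero_pt a3 h3 (by linarith) hsin3
      have hsin12 : sin a1 = 0 ∨ sin a2 = 0 := by
        have hne : cos a3 ^ 2 ≠ 0 := pow_ne_zero 2 hc3.ne'
        have h12 := (mul_eq_zero.mp ht1).resolve_right hne
        rcases mul_eq_zero.mp h12 with h' | h'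
        · exact Or.inl (sq_eq_zero_iff.mp h')
        · exact Or.inr (sq_eq_zero_iff.mp h')
      have ha2 : a2 = 0 := by
        rcases hsin12 with h' | h'
        · have := sin_eq_zero_pt a1 h0 (by linarith) h'
          linarith
        · exact sin_eq_zero_pt a2 h2 (by linarith) h'
      exact ⟨ha2, ha3⟩
    · rintro ⟨ha2, ha3⟩
      subst ha2; subst ha3
      unfold z3sq
      simp
end

section
/- With the canonical Schmidt coefficients $|\zeta_k|$ of $U(\alpha_1,\alpha_2,\alpha_3)$ and $0 \le \alpha_3 \le \alpha_2 \le \alpha_1 \le \pi/4$, the strict chain $|\zeta_0| > |\zeta_1| = |\zeta_2| = |\zeta_3| > 0$ holds if and only if $0 < \alpha_1 = \alpha_2 = \alpha_3 < \pi/4$. -/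
open Real

set_option maxHeartbeats 1000000 in
/-- The strict chain `|ζ₀| > |ζ₁| = |ζ₂| = |ζ₃| > 0` holds iff `0 < α₁ = α₂ = α₃ < π/4`. -/
theorem schmidt_coeff_special_pattern (a1 a2 a3 : ℝ)
    (h3 : 0 ≤ a3) (h32 : a3 ≤ a2) (h21 : a2 ≤ a1) (h1 : a1 ≤ π / 4) :
    (Real.sqrt (z0sq a1 a2 a3) > Real.sqrt (z1sq a1 a2 a3) ∧
     Real.sqrt (z1sq a1 a2 a3) = Real.sqrt (z2sq a1 a2 a3) ∧
     Real.sqrt (z2sq a1 a2 a3) = Real.sqrt (z3sq a1 a2 a3) ∧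
     Real.sqrt (z3sq a1 a2 a3) > 0) ↔
    (0 < a3 ∧ a1 = a2 ∧ a2 = a3 ∧ a1 < π / 4) := by
  have hpi : (0:ℝ) < π := Real.pi_pos
  have ha2 : 0 ≤ a2 := le_trans h3 h32
  have ha1 : 0 ≤ a1 := le_trans ha2 h21
  have h2 : a2 ≤ π / 4 := le_trans h21 h1
  have h3' : a3 ≤ π / 4 := le_trans h32 h2
  have hs3 : 0 ≤ sin a3 := Real.sin_nonneg_of_nonneg_of_le_pi h3 (by linarith)
  have hs2 : 0 ≤ sin a2 := Real.sin_nonneg_of_nonneg_of_le_pi ha2 (by linarith)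
  have hs1 : 0 ≤ sin a1 := Real.sin_nonneg_of_nonneg_of_le_pi ha1 (by linarith)
  have hmem : ∀ x : ℝ, 0 ≤ x → x ≤ π / 4 → x ∈ Set.Icc (-(π/2)) (π/2) := by
    intro x hx hx'; exact ⟨by linarith, by linarith⟩
  have hs32 : sin a3 ≤ sin a2 :=
    Real.strictMonoOn_sin.monotoneOn (hmem a3 h3 h3') (hmem a2 ha2 h2) h32
  have hs21 : sin a2 ≤ sin a1 :=
    Real.strictMonoOn_sin.monotoneOn (hmem a2 ha2 h2) (hmem a1 ha1 h1) h21
  have hc1 : 0 < cos a1 := Real.cos_pos_of_mem_Ioo ⟨by linarith, by linarith⟩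
  have hc2 : 0 < cos a2 := Real.cos_pos_of_mem_Ioo ⟨by linarith, by linarith⟩
  have hc3 : 0 < cos a3 := Real.cos_pos_of_mem_Ioo ⟨by linarith, by linarith⟩
  have hc12 : cos a1 ≤ cos a2 :=
    (Real.strictAntiOn_cos.antitoneOn ⟨ha2, by linarith⟩ ⟨ha1, by linarith⟩ h21)
  have hc23 : cos a2 ≤ cos a3 :=
    (Real.strictAntiOn_cos.antitoneOn ⟨h3, by linarith⟩ ⟨ha2, by linarith⟩ h32)
  have hsc : ∀ x : ℝ, 0 ≤ x → x ≤ π / 4 → sin x ≤ cos x := by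
    intro x hx hx'
    have : sin x ≤ sin (π / 2 - x) :=
      Real.strictMonoOn_sin.monotoneOn (hmem x hx hx') ⟨by linarith, by linarith⟩
        (by linarith)
    rwa [Real.sin_pi_div_two_sub] at this
  have hsc1 : sin a1 ≤ cos a1 := hsc a1 ha1 h1
  have hsc2 : sin a2 ≤ cos a2 := hsc a2 ha2 h2
  have hsc3 : sin a3 ≤ cos a3 := hsc a3 h3 h3'
  have p1 : sin a1 ^ 2 + cos a1 ^ 2 = 1 := Real.sin_sq_add_cos_sq a1
  have p2 : sin a2 ^ 2 + cos a2 ^ 2 = 1 := Real.sin_sq_add_cos_sq a2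
  have p3 : sin a3 ^ 2 + cos a3 ^ 2 = 1 := Real.sin_sq_add_cos_sq a3
  have hz0 : 0 ≤ z0sq a1 a2 a3 := by unfold z0sq; positivity
  have hz1 : 0 ≤ z1sq a1 a2 a3 := by unfold z1sq; positivity
  have hz2 : 0 ≤ z2sq a1 a2 a3 := by unfold z2sq; positivity
  have hz3 : 0 ≤ z3sq a1 a2 a3 := by unfold z3sq; positivity
  rw [gt_iff_lt, gt_iff_lt, Real.sqrt_lt_sqrt_iff hz1, Real.sqrt_inj hz1 hz2,
    Real.sqrt_inj hz2 hz3, Real.sqrt_pos]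
  constructor
  · rintro ⟨h01, h12, h23, h3pos⟩
    simp only [z0sq, z1sq, z2sq, z3sq] at h01 h12 h23 h3pos
    -- strictness of a1 < π/4 through sin a1 < cos a1
    have hx : sin a1 < cos a1 := by
      rcases lt_or_eq_of_le hsc1 with h | h
      · exact h
      · rw [h] at h01; linarith
    -- a1 = a2
    have hE1 : (sin a1 ^ 2 * cos a2 ^ 2 - cos a1 ^ 2 * sin a2 ^ 2) *
        (cos a3 ^ 2 - sin a3 ^ 2) = 0 := by linear_combination h12
    have hD3 : sin a3 ^ 2 < cos a3 ^ 2 := by nlinarith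
    have he12 : a1 = a2 := by
      have hE : sin a1 * cos a2 = cos a1 * sin a2 := by
        rcases mul_eq_zero.mp hE1 with h | h
        · have : (sin a1 * cos a2) ^ 2 = (cos a1 * sin a2) ^ 2 := by nlinarith
          exact (pow_left_inj₀ (by positivity) (by positivity) two_ne_zero).mp this
        · linarith
      have hs : sin (a1 - a2) = 0 := by rw [Real.sin_sub]; linarith
      have := (Real.sin_eq_zero_iff_of_lt_of_lt (by linarith) (by linarith)).mp hs
      linarith
    -- a2 = a3
    have hD1 : sin a1 ^ 2 < cos a1 ^ 2 := by nlinarith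
    have hE2 : (sin a2 ^ 2 * cos a3 ^ 2 - cos a2 ^ 2 * sin a3 ^ 2) *
        (cos a1 ^ 2 - sin a1 ^ 2) = 0 := by linear_combination h23
    have he23 : a2 = a3 := by
      have hE : sin a2 * cos a3 = cos a2 * sin a3 := by
        rcases mul_eq_zero.mp hE2 with h | h
        · have : (sin a2 * cos a3) ^ 2 = (cos a2 * sin a3) ^ 2 := by nlinarith
          exact (pow_left_inj₀ (by positivity) (by positivity) two_ne_zero).mp this
        · linarith
      have hs : sin (a2 - a3) = 0 := by rw [Real.sin_sub]; linarith
      have := (Real.sin_eq_zero_iff_of_lt_of_lt (by linarith) (by linarith)).mp hs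
      linarith
    -- 0 < a3
    have ha3pos : 0 < a3 := by
      rcases lt_or_eq_of_le h3 with h | h
      · exact h
      · exfalso
        subst he12; subst he23
        rw [← h] at h3pos
        simp at h3pos
    -- a1 < π/4
    have ha1lt : a1 < π / 4 := by
      rcases lt_or_eq_of_le h1 with h | h
      · exact h
      · rw [h, Real.sin_pi_div_four, Real.cos_pi_div_four] at hx; linarith
    exact ⟨ha3pos, he12, he23, ha1lt⟩
  · rintro ⟨ha3pos, he12, he23, ha1lt⟩
    subst he12; subst he23
    have hspos : 0 < sin a1 := Real.sin_pos_of_pos_of_lt_pi ha3pos (by linarith)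
    have hx : sin a1 < cos a1 := by
      have : sin a1 < sin (π / 2 - a1) :=
        Real.strictMonoOn_sin (hmem a1 ha1 h1) ⟨by linarith, by linarith⟩
          (by linarith)
      rwa [Real.sin_pi_div_two_sub] at this
    refine ⟨?_, by unfold z1sq z2sq; ring, by unfold z2sq z3sq; ring, ?_⟩
    · have hd : 0 < cos a1 ^ 2 - sin a1 ^ 2 := by nlinarith
      have hid : z0sq a1 a1 a1 - z1sq a1 a1 a1 =
          (cos a1 ^ 2 - sin a1 ^ 2) ^ 2 * (sin a1 ^ 2 + cos a1 ^ 2) := by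
        simp only [z0sq, z1sq]; ring
      rw [p1, mul_one] at hid
      have := pow_pos hd 2
      linarith
    · unfold z3sq; positivity
end

section
/- Let $|\zeta_k(\alpha_1,\alpha_2,\alpha_3)|$ denote the canonical Schmidt coefficients. Suppose $0 \le \alpha_3 \le \alpha_2 \le \alpha_1 \le \pi/4$ and $0 \le \alpha_3' \le \alpha_2' \le \alpha_1' \le \pi/4$. Then $|\zeta_k(\alpha_1,\alpha_2,\alpha_3)| = |\zeta_k(\alpha_1',\alpha_2',\alpha_3')|$ for all $k = 0,1,2,3$ if and only if either $(\alpha_1,\alpha_2,\alpha_3) = (\alpha_1',\alpha_2',\alpha_3')$, or $\alpha_1 = \alpha_1' = \pi/4$ and $\cos(2\alpha_2)\cos(2\alpha_3) = \cos(2\alpha_2')\cos(2\alpha_3')$. -/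
open Real

private lemma my_cos_sq (t : ℝ) : Real.cos t ^ 2 = (1 + Real.cos (2 * t)) / 2 := by
  rw [Real.cos_sq]; ring

private lemma my_sin_sq (t : ℝ) : Real.sin t ^ 2 = (1 - Real.cos (2 * t)) / 2 := by
  rw [Real.sin_sq, Real.cos_sq]; ring

private lemma z0sq_eq (p q r : ℝ) : z0sq p q r =
    (1 + (Real.cos (2*p) * Real.cos (2*q) + Real.cos (2*q) * Real.cos (2*r)
      + Real.cos (2*p) * Real.cos (2*r))) / 4 := by
  simp only [z0sq, my_cos_sq, my_sin_sq]; ring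

private lemma z1sq_eq (p q r : ℝ) : z1sq p q r =
    (1 + (- (Real.cos (2*p) * Real.cos (2*q)) + Real.cos (2*q) * Real.cos (2*r)
      - Real.cos (2*p) * Real.cos (2*r))) / 4 := by
  simp only [z1sq, my_cos_sq, my_sin_sq]; ring

private lemma z2sq_eq (p q r : ℝ) : z2sq p q r =
    (1 + (- (Real.cos (2*p) * Real.cos (2*q)) - Real.cos (2*q) * Real.cos (2*r)
      + Real.cos (2*p) * Real.cos (2*r))) / 4 := by
  simp only [z2sq, my_cos_sq, my_sin_sq]; ring

private lemma z3sq_eq (p q r : ℝ) : z3sq p q r =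
    (1 + (Real.cos (2*p) * Real.cos (2*q) - Real.cos (2*q) * Real.cos (2*r)
      - Real.cos (2*p) * Real.cos (2*r))) / 4 := by
  simp only [z3sq, my_cos_sq, my_sin_sq]; ring

private lemma cos2_inj {a b : ℝ} (ha0 : 0 ≤ a) (ha : a ≤ π / 4) (hb0 : 0 ≤ b)
    (hb : b ≤ π / 4) (h : Real.cos (2 * a) = Real.cos (2 * b)) : a = b := by
  have hπ := Real.pi_pos
  have : 2 * a = 2 * b := Real.injOn_cos
    ⟨by linarith, by linarith⟩ ⟨by linarith, by linarith⟩ h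
  linarith

set_option maxHeartbeats 2000000 in
/-- Two canonical two-qubit unitaries share the same Schmidt coefficients iff their
parameters coincide, or both have `α₁ = π/4` and `cos 2α₂ cos 2α₃` agree. -/
theorem schmidt_coeff_same (a1 a2 a3 b1 b2 b3 : ℝ)
    (h3 : 0 ≤ a3) (h32 : a3 ≤ a2) (h21 : a2 ≤ a1) (h1 : a1 ≤ π / 4)
    (g3 : 0 ≤ b3) (g32 : b3 ≤ b2) (g21 : b2 ≤ b1) (g1 : b1 ≤ π / 4) :
    (Real.sqrt (z0sq a1 a2 a3) = Real.sqrt (z0sq b1 b2 b3) ∧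
     Real.sqrt (z1sq a1 a2 a3) = Real.sqrt (z1sq b1 b2 b3) ∧
     Real.sqrt (z2sq a1 a2 a3) = Real.sqrt (z2sq b1 b2 b3) ∧
     Real.sqrt (z3sq a1 a2 a3) = Real.sqrt (z3sq b1 b2 b3)) ↔
    ((a1 = b1 ∧ a2 = b2 ∧ a3 = b3) ∨
     (a1 = π / 4 ∧ b1 = π / 4 ∧
      Real.cos (2 * a2) * Real.cos (2 * a3) = Real.cos (2 * b2) * Real.cos (2 * b3))) := by
  have hπ := Real.pi_pos
  have n0 : 0 ≤ z0sq a1 a2 a3 := by unfold z0sq; positivity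
  have n1 : 0 ≤ z1sq a1 a2 a3 := by unfold z1sq; positivity
  have n2 : 0 ≤ z2sq a1 a2 a3 := by unfold z2sq; positivity
  have n3 : 0 ≤ z3sq a1 a2 a3 := by unfold z3sq; positivity
  have m0 : 0 ≤ z0sq b1 b2 b3 := by unfold z0sq; positivity
  have m1 : 0 ≤ z1sq b1 b2 b3 := by unfold z1sq; positivity
  have m2 : 0 ≤ z2sq b1 b2 b3 := by unfold z2sq; positivity
  have m3 : 0 ≤ z3sq b1 b2 b3 := by unfold z3sq; positivity
  rw [Real.sqrt_inj n0 m0, Real.sqrt_inj n1 m1, Real.sqrt_inj n2 m2, Real.sqrt_inj n3 m3]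
  rw [z0sq_eq a1 a2 a3, z0sq_eq b1 b2 b3, z1sq_eq a1 a2 a3, z1sq_eq b1 b2 b3,
    z2sq_eq a1 a2 a3, z2sq_eq b1 b2 b3, z3sq_eq a1 a2 a3, z3sq_eq b1 b2 b3]
  have hx0 : 0 ≤ Real.cos (2 * a1) := Real.cos_nonneg_of_mem_Icc ⟨by linarith, by linarith⟩
  have hx0' : 0 ≤ Real.cos (2 * b1) := Real.cos_nonneg_of_mem_Icc ⟨by linarith, by linarith⟩
  have hxy : Real.cos (2 * a1) ≤ Real.cos (2 * a2) :=
    Real.cos_le_cos_of_nonneg_of_le_pi (by linarith) (by linarith) (by linarith)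
  have hyz : Real.cos (2 * a2) ≤ Real.cos (2 * a3) :=
    Real.cos_le_cos_of_nonneg_of_le_pi (by linarith) (by linarith) (by linarith)
  have hxy' : Real.cos (2 * b1) ≤ Real.cos (2 * b2) :=
    Real.cos_le_cos_of_nonneg_of_le_pi (by linarith) (by linarith) (by linarith)
  have hyz' : Real.cos (2 * b2) ≤ Real.cos (2 * b3) :=
    Real.cos_le_cos_of_nonneg_of_le_pi (by linarith) (by linarith) (by linarith)
  set x := Real.cos (2 * a1) with hxdef
  set y := Real.cos (2 * a2) with hydef
  set z := Real.cos (2 * a3) with hzdef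
  set x' := Real.cos (2 * b1) with hxdef'
  set y' := Real.cos (2 * b2) with hydef'
  set z' := Real.cos (2 * b3) with hzdef'
  constructor
  · rintro ⟨e0, e1, e2, e3⟩
    have pxy : x * y = x' * y' := by linarith
    have pxz : x * z = x' * z' := by linarith
    have pyz : y * z = y' * z' := by linarith
    by_cases hx : x = 0
    · -- then x' = 0 as well
      have hx' : x' = 0 := by
        by_contra h
        have hx'pos : 0 < x' := lt_of_le_of_ne hx0' (Ne.symm h)
        have : 0 < x' * y' := mul_pos hx'pos (lt_of_lt_of_le hx'pos hxy')
        rw [← pxy, hx, zero_mul] at this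
        exact lt_irrefl 0 this
      right
      refine ⟨?_, ?_, pyz⟩
      · have : (2 : ℝ) * a1 = π / 2 := by
          have h2 : Real.cos (2 * a1) = Real.cos (π / 2) := by
            rw [Real.cos_pi_div_two]; exact hx
          exact Real.injOn_cos ⟨by linarith, by linarith⟩
            ⟨by linarith, by linarith⟩ h2
        linarith
      · have : (2 : ℝ) * b1 = π / 2 := by
          have h2 : Real.cos (2 * b1) = Real.cos (π / 2) := by
            rw [Real.cos_pi_div_two]; exact hx'
          exact Real.injOn_cos ⟨by linarith, by linarith⟩
            ⟨by linarith, by linarith⟩ h2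
        linarith
    · -- x > 0, hence everything positive and equal
      have hxpos : 0 < x := lt_of_le_of_ne hx0 (Ne.symm hx)
      have hypos : 0 < y := lt_of_lt_of_le hxpos hxy
      have hzpos : 0 < z := lt_of_lt_of_le hypos hyz
      have hx'pos : 0 < x' := by
        by_contra h
        have hx'z : x' = 0 := le_antisymm (not_lt.mp h) hx0'
        have : x * y = 0 := by rw [pxy, hx'z, zero_mul]
        exact (mul_pos hxpos hypos).ne' this
      have hy'pos : 0 < y' := lt_of_lt_of_le hx'pos hxy'
      have hz'pos : 0 < z' := lt_of_lt_of_le hy'pos hyz'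
      have hsq : x ^ 2 * (y * z) = x' ^ 2 * (y * z) := by
        calc x ^ 2 * (y * z) = (x * y) * (x * z) := by ring
          _ = (x' * y') * (x' * z') := by rw [pxy, pxz]
          _ = x' ^ 2 * (y' * z') := by ring
          _ = x' ^ 2 * (y * z) := by rw [pyz]
      have hxeq : x = x' := by
        have h2 : x ^ 2 = x' ^ 2 := by
          have hyzpos : 0 < y * z := mul_pos hypos hzpos
          exact mul_right_cancel₀ (ne_of_gt hyzpos) hsq
        have hfac : (x - x') * (x + x') = 0 := by linear_combination h2
        rcases mul_eq_zero.mp hfac with h | h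
        · linarith
        · linarith
      have hyeq : y = y' := by
        have h6 := pxy
        rw [hxeq] at h6
        exact mul_left_cancel₀ (ne_of_gt hx'pos) h6
      have hzeq : z = z' := by
        have h6 := pxz
        rw [hxeq] at h6
        exact mul_left_cancel₀ (ne_of_gt hx'pos) h6
      rw [hxdef, hxdef'] at hxeq
      rw [hydef, hydef'] at hyeq
      rw [hzdef, hzdef'] at hzeq
      left
      exact ⟨cos2_inj (by linarith) h1 (by linarith) g1 hxeq,
        cos2_inj (by linarith) (by linarith) (by linarith) (by linarith) hyeq,
        cos2_inj h3 (by linarith) g3 (by linarith) hzeq⟩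
  · rintro (⟨e1, e2, e3⟩ | ⟨e1, e2, e3⟩)
    · subst e1; subst e2; subst e3; exact ⟨rfl, rfl, rfl, rfl⟩
    · have hx : x = 0 := by
        rw [hxdef, e1]
        rw [show (2 : ℝ) * (π / 4) = π / 2 by ring, Real.cos_pi_div_two]
      have hx' : x' = 0 := by
        rw [hxdef', e2]
        rw [show (2 : ℝ) * (π / 4) = π / 2 by ring, Real.cos_pi_div_two]
      refine ⟨?_, ?_, ?_, ?_⟩ <;> rw [hx, hx'] <;> rw [show y * z = y' * z' from e3] <;> ring
end

section
/- For $0 \le \alpha_3 \le \alpha_2 \le \alpha_1 \le \pi/4$, the canonical Schmidt coefficients satisfy the bounds $1/2 \le |\zeta_0| \le 1$, $0 \le |\zeta_1| \le 1/\sqrt{2}$, $0 \le |\zeta_2| \le 1/2$, and $0 \le |\zeta_3| \le 1/2$. -/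
open Real

set_option maxHeartbeats 800000 in
/-- Ranges of the four Schmidt coefficients of `U(α₁,α₂,α₃)`. -/
theorem schmidt_coeff_ranges (a1 a2 a3 : ℝ)
    (h3 : 0 ≤ a3) (h32 : a3 ≤ a2) (h21 : a2 ≤ a1) (h1 : a1 ≤ π / 4) :
    (1 / 2 ≤ Real.sqrt (z0sq a1 a2 a3) ∧ Real.sqrt (z0sq a1 a2 a3) ≤ 1) ∧
    (0 ≤ Real.sqrt (z1sq a1 a2 a3) ∧ Real.sqrt (z1sq a1 a2 a3) ≤ 1 / Real.sqrt 2) ∧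
    (0 ≤ Real.sqrt (z2sq a1 a2 a3) ∧ Real.sqrt (z2sq a1 a2 a3) ≤ 1 / 2) ∧
    (0 ≤ Real.sqrt (z3sq a1 a2 a3) ∧ Real.sqrt (z3sq a1 a2 a3) ≤ 1 / 2) := by
  have hpi := Real.pi_pos
  have h20 : 0 ≤ a2 := le_trans h3 h32
  have h10 : 0 ≤ a1 := le_trans h20 h21
  have hmem : ∀ a : ℝ, 0 ≤ a → a ≤ π/4 → a ∈ Set.Icc (-(π/2)) (π/2) := by
    intro a ha hb; constructor <;> nlinarith
  have hs3 : 0 ≤ sin a3 := Real.sin_nonneg_of_nonneg_of_le_pi h3 (by linarith)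
  have hs2 : 0 ≤ sin a2 := Real.sin_nonneg_of_nonneg_of_le_pi h20 (by linarith)
  have hs1 : 0 ≤ sin a1 := Real.sin_nonneg_of_nonneg_of_le_pi h10 (by linarith)
  have m32 : sin a3 ≤ sin a2 :=
    Real.strictMonoOn_sin.monotoneOn (hmem a3 h3 (by linarith)) (hmem a2 h20 (by linarith)) h32
  have m21 : sin a2 ≤ sin a1 :=
    Real.strictMonoOn_sin.monotoneOn (hmem a2 h20 (by linarith)) (hmem a1 h10 h1) h21
  have m1 : sin a1 ≤ Real.sqrt 2 / 2 := by
    have := Real.strictMonoOn_sin.monotoneOn (hmem a1 h10 h1) (hmem (π/4) (by linarith) le_rfl) h1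
    rwa [Real.sin_pi_div_four] at this
  set x := sin a1 ^ 2 with hxdef
  set y := sin a2 ^ 2 with hydef
  set z := sin a3 ^ 2 with hzdef
  have hx0 : 0 ≤ x := sq_nonneg _
  have hzy : z ≤ y := by
    have := pow_le_pow_left₀ hs3 m32 2; simpa using this
  have hyx : y ≤ x := by
    have := pow_le_pow_left₀ hs2 m21 2; simpa using this
  have hz0 : 0 ≤ z := sq_nonneg _
  have hy0 : 0 ≤ y := sq_nonneg _
  have hx12 : x ≤ 1/2 := by
    have h2 : Real.sqrt 2 ^ 2 = 2 := Real.sq_sqrt (by norm_num)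
    have := pow_le_pow_left₀ hs1 m1 2
    nlinarith
  have hc1 : cos a1 ^ 2 = 1 - x := by have := Real.sin_sq_add_cos_sq a1; linarith
  have hc2 : cos a2 ^ 2 = 1 - y := by have := Real.sin_sq_add_cos_sq a2; linarith
  have hc3 : cos a3 ^ 2 = 1 - z := by have := Real.sin_sq_add_cos_sq a3; linarith
  have e0 : z0sq a1 a2 a3 = (1-x)*(1-y)*(1-z) + x*y*z := by
    rw [z0sq, hc1, hc2, hc3]
  have e1 : z1sq a1 a2 a3 = (1-x)*y*z + x*(1-y)*(1-z) := by
    rw [z1sq, hc1, hc2, hc3]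
  have e2 : z2sq a1 a2 a3 = x*(1-y)*z + (1-x)*y*(1-z) := by
    rw [z2sq, hc1, hc2, hc3]
  have e3 : z3sq a1 a2 a3 = x*y*(1-z) + (1-x)*(1-y)*z := by
    rw [z3sq, hc1, hc2, hc3]
  have hxy1 : x + y ≤ 1 := by linarith
  refine ⟨⟨?_, ?_⟩, ⟨Real.sqrt_nonneg _, ?_⟩, ⟨Real.sqrt_nonneg _, ?_⟩,
    ⟨Real.sqrt_nonneg _, ?_⟩⟩
  · rw [show (1:ℝ)/2 = Real.sqrt (1/4) by
      rw [show (1:ℝ)/4 = (1/2)^2 by norm_num, Real.sqrt_sq (by norm_num)]]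
    apply Real.sqrt_le_sqrt
    rw [e0]
    nlinarith [mul_nonneg (by linarith : (0:ℝ) ≤ 1/2 - x) (by linarith : (0:ℝ) ≤ 1/2 - y),
      mul_nonneg (by linarith : (0:ℝ) ≤ 1/2 - z) (by linarith : (0:ℝ) ≤ 1 - x - y)]
  · apply Real.sqrt_le_one.mpr
    rw [e0]
    nlinarith [mul_nonneg hx0 (by linarith : (0:ℝ) ≤ 1 - y),
      mul_nonneg hy0 (by linarith : (0:ℝ) ≤ 1 - z),
      mul_nonneg hz0 (by linarith : (0:ℝ) ≤ 1 - x)]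
  · rw [show (1:ℝ)/Real.sqrt 2 = Real.sqrt (1/2) by
      rw [one_div, one_div, ← Real.sqrt_inv]]
    apply Real.sqrt_le_sqrt
    rw [e1]
    nlinarith [mul_nonneg (by linarith : (0:ℝ) ≤ 1/2 - x) (by linarith : (0:ℝ) ≤ 1 - y - z),
      mul_nonneg hy0 (by linarith : (0:ℝ) ≤ 1 - z),
      mul_nonneg hz0 (by linarith : (0:ℝ) ≤ 1 - y)]
  · rw [show (1:ℝ)/2 = Real.sqrt (1/4) by
      rw [show (1:ℝ)/4 = (1/2)^2 by norm_num, Real.sqrt_sq (by norm_num)]]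
    apply Real.sqrt_le_sqrt
    rw [e2]
    nlinarith [mul_nonneg (by linarith : (0:ℝ) ≤ x - y) (by linarith : (0:ℝ) ≤ y - z),
      sq_nonneg (1/2 - y)]
  · rw [show (1:ℝ)/2 = Real.sqrt (1/4) by
      rw [show (1:ℝ)/4 = (1/2)^2 by norm_num, Real.sqrt_sq (by norm_num)]]
    apply Real.sqrt_le_sqrt
    rw [e3]
    nlinarith [mul_nonneg (by linarith : (0:ℝ) ≤ y - z) (by linarith : (0:ℝ) ≤ 1 - x - y),
      sq_nonneg (1/2 - y)]
end
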